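/- arXiv:0711.2036 — 4 statements merged into one kernel-verified Lean document; each statement's English description precedes it below -/
import Mathlib

section
/- Fix a real parameter v ∈ ℝ. For λ = (λ₁, λ₂) ∈ ℝ², define the operator π_λ on functions ψ: ℝ × ℝ × ℝ → ℂ by (π_λ ψ)(x, y, t) = exp(2πi(e^{−t}λ₁x + e^{t}λ₂y)) · ψ(x − e^{t}λ₂v, y + e^{−t}λ₁v, t). Then for all λ, η ∈ ℝ² and every function ψ, π_λ(π_η ψ) = exp(2πi·v·(λ₁η₂ − λ₂η₁)) · π_{λ+η} ψ (equality of functions on ℝ³), i.e. the operators π_λ satisfy the product rule π_λ ∘ π_η = σ(λ,η)·π_{λ+η} of the twisted group algebra with cocycle σ(λ,η) = exp(2πi·v·(λ∧η)). -/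
/-- The operator `π_λ` of the Connes–Landi isospectral deformation, acting on
functions `ψ(x, y, t)` by
`(π_λ ψ)(x,y,t) = exp(2πi(e^{−t}λ₁x + e^{t}λ₂y))·ψ(x − e^{t}λ₂v, y + e^{−t}λ₁v, t)`. -/
noncomputable def piOp (v : ℝ) (lam : ℝ × ℝ) (ψ : ℝ → ℝ → ℝ → ℂ) : ℝ → ℝ → ℝ → ℂ :=
  fun x y t =>
    Complex.exp (2 * Real.pi * Complex.I *
        ((Real.exp (-t) * lam.1 * x + Real.exp t * lam.2 * y : ℝ) : ℂ)) *
      ψ (x - Real.exp t * lam.2 * v) (y + Real.exp (-t) * lam.1 * v) t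

/-- The operators `π_λ` satisfy the product rule of the twisted group algebra with
cocycle `σ(λ,η) = exp(2πi·v·(λ∧η))`:
`π_λ ∘ π_η = exp(2πi·v·(λ₁η₂ − λ₂η₁))·π_{λ+η}`. -/
theorem stmt7 (v : ℝ) (lam eta : ℝ × ℝ) (ψ : ℝ → ℝ → ℝ → ℂ) :
    piOp v lam (piOp v eta ψ) = fun x y t =>
      Complex.exp (2 * Real.pi * Complex.I *
          ((v * (lam.1 * eta.2 - lam.2 * eta.1) : ℝ) : ℂ)) *
        piOp v (lam + eta) ψ x y t := by
  funext x y t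
  have hexp : Complex.exp (-(t:ℂ)) * Complex.exp (t:ℂ) = 1 := by
    rw [← Complex.exp_add]; simp
  simp only [piOp, Prod.fst_add, Prod.snd_add]
  have harg1 : x - Real.exp t * lam.2 * v - Real.exp t * eta.2 * v
      = x - Real.exp t * (lam.2 + eta.2) * v := by ring
  have harg2 : y + Real.exp (-t) * lam.1 * v + Real.exp (-t) * eta.1 * v
      = y + Real.exp (-t) * (lam.1 + eta.1) * v := by ring
  rw [harg1, harg2, ← mul_assoc, ← mul_assoc, ← Complex.exp_add, ← Complex.exp_add]
  congr 2
  push_cast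
  linear_combination (2 * Real.pi * Complex.I * eta.2 * lam.1 * v -
    2 * Real.pi * Complex.I * eta.1 * lam.2 * v) * hexp
end

section
/- Let K be a field, c: K → K a ring isomorphism with c ∘ c = id, L ⊆ K an additive subgroup, and ϖ: L × L → Kˣ with ϖ(λ,η)·c(ϖ(λ,η)) = 1 for all λ, η. On V = (L →₀ K) × (L →₀ K) with the Lorentzian pairing ((v₁,v₂),(w₁,w₂)) = Σ_ℓ c(v₁(ℓ))w₁(ℓ) + Σ_ℓ c(v₂(ℓ))w₂(ℓ), let D(v,w) = (ℓ ↦ ℓ·w(ℓ), ℓ ↦ c(ℓ)·v(ℓ)), and for η ∈ L let R^ϖ_η act diagonally by (R^ϖ_η(v,w))ᵢ(μ) = ϖ(μ−η, η)·(v or w)(μ−η) for i = 1,2. Then for every x ∈ V, the commutator C = D∘R^ϖ_η − R^ϖ_η∘D satisfies (C x, C x) = η·c(η)·(x, x). In particular the commutator [D, R^ϖ_η] scales the Lorentzian pairing by the norm N(η) = η·c(η). -/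
/-- The Lorentzian pairing `(v, w) = Σ_λ c(v(λ))·w(λ)` on finitely supported
functions `Λ →₀ K`, with `c` the Galois involution. -/
noncomputable def lorentzPairing {K : Type*} [Field K] (c : K ≃+* K) {Λ : Type*}
    (v w : Λ →₀ K) : K :=
  v.sum fun lam a => c a * w lam

/-- The Lorentzian pairing on `V = (L →₀ K) × (L →₀ K)`. -/
noncomputable def lorentzPairing2 {K : Type*} [Field K] (c : K ≃+* K) {Λ : Type*}
    (v w : (Λ →₀ K) × (Λ →₀ K)) : K :=
  lorentzPairing c v.1 w.1 + lorentzPairing c v.2 w.2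

/-- Key lemma: if `f μ = w μ * g (μ - η)` with `c (w μ) * w μ = s` constant,
then the diagonal Lorentz pairing of `f` is `s` times that of `g`. -/
lemma lorentzPairing_shift {K : Type*} [Field K] (c : K ≃+* K) {Λ : Type*}
    [AddCommGroup Λ] (η : Λ) (f g : Λ →₀ K) (w : Λ → K) (s : K)
    (hw : ∀ μ : Λ, c (w μ) * w μ = s)
    (hf : ∀ μ : Λ, f μ = w μ * g (μ - η)) :
    lorentzPairing c f f = s * lorentzPairing c g g := by
  unfold lorentzPairing
  rw [Finsupp.sum, Finsupp.sum]
  have hsub : f.support ⊆ g.support.map (addRightEmbedding η) := by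
    intro μ hμ
    rw [Finsupp.mem_support_iff] at hμ
    rw [Finset.mem_map]
    refine ⟨μ - η, ?_, by simp [addRightEmbedding]⟩
    rw [Finsupp.mem_support_iff]
    intro h0
    apply hμ
    rw [hf, h0, mul_zero]
  rw [Finset.sum_subset hsub (by
    intro μ _ h
    rw [Finsupp.notMem_support_iff] at h
    simp [h])]
  rw [Finset.sum_map, Finset.mul_sum]
  apply Finset.sum_congr rfl
  intro μ _
  simp only [addRightEmbedding_apply]
  rw [hf, add_sub_cancel_right, map_mul]
  rw [show c (w (μ + η)) * c (g μ) * (w (μ + η) * g μ)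
      = (c (w (μ + η)) * w (μ + η)) * (c (g μ) * g μ) by ring, hw]

/-- The commutator `C = [D, R^ϖ_η]` of the Lorentzian Dirac operator with the
twisted translation `R^ϖ_η` scales the Lorentzian pairing by the norm
`N(η) = η·c(η)`: `(Cx, Cx) = η·c(η)·(x, x)`. -/
theorem stmt12 {K : Type*} [Field K] (c : K ≃+* K) (hc : ∀ x, c (c x) = x)
    (L : AddSubgroup K) (ϖ : L → L → Kˣ)
    (hϖ : ∀ lam η : L, (ϖ lam η : K) * c (ϖ lam η) = 1)
    (η : L)
    (D R : (L →₀ K) × (L →₀ K) → (L →₀ K) × (L →₀ K))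
    (hD : ∀ (p : (L →₀ K) × (L →₀ K)) (ℓ : L),
      (D p).1 ℓ = (ℓ : K) * p.2 ℓ ∧ (D p).2 ℓ = c (ℓ : K) * p.1 ℓ)
    (hR : ∀ (p : (L →₀ K) × (L →₀ K)) (μ : L),
      (R p).1 μ = (ϖ (μ - η) η : K) * p.1 (μ - η) ∧
      (R p).2 μ = (ϖ (μ - η) η : K) * p.2 (μ - η))
    (x : (L →₀ K) × (L →₀ K)) :
    lorentzPairing2 c (D (R x) - R (D x)) (D (R x) - R (D x)) =
      (η : K) * c (η : K) * lorentzPairing2 c x x := by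
  set C := D (R x) - R (D x) with hC
  have hC1 : ∀ μ : L, C.1 μ = ((ϖ (μ - η) η : K) * (η : K)) * x.2 (μ - η) := by
    intro μ
    have h1 := (hD (R x) μ).1
    have h2 := (hR (D x) μ).1
    have h3 := (hR x μ).2
    have h4 := (hD x (μ - η)).1
    have hcoe : ((μ - η : L) : K) = (μ : K) - (η : K) := rfl
    simp only [hC, Prod.fst_sub, Finsupp.sub_apply, h1, h2, h3, h4, hcoe]
    ring
  have hC2 : ∀ μ : L, C.2 μ = ((ϖ (μ - η) η : K) * c (η : K)) * x.1 (μ - η) := by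
    intro μ
    have h1 := (hD (R x) μ).2
    have h2 := (hR (D x) μ).2
    have h3 := (hR x μ).1
    have h4 := (hD x (μ - η)).2
    have hcoe : ((μ - η : L) : K) = (μ : K) - (η : K) := rfl
    simp only [hC, Prod.snd_sub, Finsupp.sub_apply, h1, h2, h3, h4, hcoe, map_sub]
    ring
  have e1 : lorentzPairing c C.1 C.1 = ((η : K) * c (η : K)) * lorentzPairing c x.2 x.2 := by
    apply lorentzPairing_shift c η C.1 x.2 (fun μ => (ϖ (μ - η) η : K) * (η : K)) _ _ hC1
    intro μ
    have := hϖ (μ - η) η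
    rw [map_mul]
    calc c ((ϖ (μ - η) η : K)) * c (η : K) * ((ϖ (μ - η) η : K) * (η : K))
        = ((ϖ (μ - η) η : K) * c ((ϖ (μ - η) η : K))) * (c (η : K) * (η : K)) := by ring
      _ = (η : K) * c (η : K) := by rw [this, one_mul, mul_comm]
  have e2 : lorentzPairing c C.2 C.2 = ((η : K) * c (η : K)) * lorentzPairing c x.1 x.1 := by
    apply lorentzPairing_shift c η C.2 x.1 (fun μ => (ϖ (μ - η) η : K) * c (η : K)) _ _ hC2
    intro μ
    have := hϖ (μ - η) η
    rw [map_mul, hc]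
    calc c ((ϖ (μ - η) η : K)) * (η : K) * ((ϖ (μ - η) η : K) * c (η : K))
        = ((ϖ (μ - η) η : K) * c ((ϖ (μ - η) η : K))) * ((η : K) * c (η : K)) := by ring
      _ = (η : K) * c (η : K) := by rw [this, one_mul]
  unfold lorentzPairing2
  rw [e1, e2]
  ring
end

section
/- Let K be a field, c: K → K a ring isomorphism with c ∘ c = id, L ⊆ K an additive subgroup, and ε ∈ Kˣ with c(ε) = ε⁻¹. Let ρ: L → ℤ be a function such that for every ℓ ∈ L, the element J(ℓ) := ε^{−2ρ(ℓ)}·ℓ lies in L and ρ(J(ℓ)) = −ρ(ℓ). On V = (L →₀ K) × (L →₀ K), define D(v,w) = (ℓ ↦ ℓ·w(ℓ), ℓ ↦ c(ℓ)·v(ℓ)) and U(v,w) = (μ ↦ ε^{ρ(μ)}·v(J(μ)), μ ↦ ε^{−ρ(μ)}·w(J(μ))). Then U ∘ U = id and U ∘ D ∘ U = D; that is, U is an involutive symmetry of the Lorentzian Dirac operator, U† D U = D. -/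
private lemma eps_aux {K : Type*} [Field K] (ε : K) (hε : ε ≠ 0) (a : ℤ) (x y : K) :
    ε ^ a * (ε ^ (-(2 * a)) * x * (ε ^ a * y)) = x * y := by
  rw [show ε ^ a * (ε ^ (-(2*a)) * x * (ε ^ a * y)) =
      (ε ^ a * ε ^ (-(2*a)) * ε ^ a) * (x * y) by ring,
    ← zpow_add₀ hε, ← zpow_add₀ hε, show a + -(2 * a) + a = 0 by ring, zpow_zero, one_mul]

/-- The Krein isometry `U = T_ε·J`, `U(v,w) = (μ ↦ ε^{ρ(μ)}v(J(μ)), μ ↦ ε^{−ρ(μ)}w(J(μ)))`,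
with `J(ℓ) = ε^{−2ρ(ℓ)}·ℓ` and `ρ(J(ℓ)) = −ρ(ℓ)`, is an involutive symmetry of the
Lorentzian Dirac operator `D(v,w) = (ℓ ↦ ℓ·w(ℓ), ℓ ↦ c(ℓ)·v(ℓ))`: `U∘U = id` and
`U∘D∘U = D`. -/
theorem stmt13 {K : Type*} [Field K] (c : K ≃+* K) (hc : ∀ x, c (c x) = x)
    (L : AddSubgroup K) (ε : Kˣ) (hcε : c (ε : K) = ((ε⁻¹ : Kˣ) : K))
    (ρ : L → ℤ) (J : L → L)
    (hJ : ∀ ℓ : L, (J ℓ : K) = (ε : K) ^ (-(2 * ρ ℓ)) * (ℓ : K))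
    (hρJ : ∀ ℓ : L, ρ (J ℓ) = -ρ ℓ)
    (D U : (L →₀ K) × (L →₀ K) → (L →₀ K) × (L →₀ K))
    (hD : ∀ (p : (L →₀ K) × (L →₀ K)) (ℓ : L),
      (D p).1 ℓ = (ℓ : K) * p.2 ℓ ∧ (D p).2 ℓ = c (ℓ : K) * p.1 ℓ)
    (hU : ∀ (p : (L →₀ K) × (L →₀ K)) (μ : L),
      (U p).1 μ = (ε : K) ^ (ρ μ) * p.1 (J μ) ∧
      (U p).2 μ = (ε : K) ^ (-(ρ μ)) * p.2 (J μ)) :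
    (∀ p : (L →₀ K) × (L →₀ K), U (U p) = p) ∧
    (∀ p : (L →₀ K) × (L →₀ K), U (D (U p)) = D p) := by
  have hε0 : (ε : K) ≠ 0 := ε.ne_zero
  have hzp : ∀ a b : ℤ, (ε : K) ^ a * (ε : K) ^ b = (ε : K) ^ (a + b) :=
    fun a b => (zpow_add₀ hε0 a b).symm
  have hJJ : ∀ ℓ : L, J (J ℓ) = ℓ := by
    intro ℓ
    apply Subtype.ext
    rw [hJ (J ℓ), hJ ℓ, hρJ ℓ, ← mul_assoc, hzp]
    norm_num
  have hcz : ∀ a : ℤ, c ((ε : K) ^ a) = (ε : K) ^ (-a) := by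
    intro a
    rw [map_zpow₀, hcε, Units.val_inv_eq_inv_val, ← zpow_neg_one, ← zpow_mul]
    ring_nf
  refine ⟨?_, ?_⟩
  · intro p
    ext μ
    · rw [(hU (U p) μ).1, (hU p (J μ)).1, hρJ, hJJ, ← mul_assoc, hzp]
      norm_num
    · rw [(hU (U p) μ).2, (hU p (J μ)).2, hρJ, hJJ, ← mul_assoc, hzp]
      norm_num
  · intro p
    ext μ
    · rw [(hU (D (U p)) μ).1, (hD (U p) (J μ)).1, (hU p (J μ)).2, hρJ, hJJ, hJ μ,
        (hD p μ).1, neg_neg]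
      exact eps_aux _ hε0 _ _ _
    · rw [(hU (D (U p)) μ).2, (hD (U p) (J μ)).2, (hU p (J μ)).1, hρJ, hJJ, hJ μ,
        (hD p μ).2, map_mul, hcz, neg_neg]
      rw [show (ε:K) ^ (-(ρ μ)) * ((ε:K) ^ (2 * ρ μ) * c (μ:K) * ((ε:K) ^ (-(ρ μ)) * p.1 μ)) =
          ((ε:K) ^ (-(ρ μ)) * (ε:K) ^ (2 * ρ μ) * (ε:K) ^ (-(ρ μ))) * (c (μ:K) * p.1 μ) by ring,
        hzp, hzp, show -(ρ μ) + 2 * ρ μ + -(ρ μ) = 0 by ring, zpow_zero, one_mul]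
end

section
/- Let ε > 1 be a real number and for s > 0 set Z_ε(s) = Σ_{k∈ℤ} (ε^{2k} + ε^{−2k})^{−s}. Then s·Z_ε(s) tends to 1/log ε as s → 0⁺ (limit along positive reals); i.e. Z_ε has a simple pole at s = 0 with residue 1/log ε. -/
open Filter Real Topology

lemma geom_int_hasSum {r : ℝ} (h0 : 0 ≤ r) (h1 : r < 1) :
    HasSum (fun k : ℤ => r ^ k.natAbs) ((1 + r) * (1 - r)⁻¹) := by
  have hnat : HasSum (fun n : ℕ => r ^ ((n : ℤ)).natAbs) (1 - r)⁻¹ := by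
    simpa using hasSum_geometric_of_lt_one h0 h1
  have hneg : HasSum (fun n : ℕ => r ^ ((-((n : ℤ) + 1)).natAbs)) (r * (1 - r)⁻¹) := by
    have h := (hasSum_geometric_of_lt_one h0 h1).mul_left r
    have : (fun n : ℕ => r ^ ((-((n : ℤ) + 1)).natAbs)) = fun n : ℕ => r * r ^ n := by
      funext n
      have : (-((n : ℤ) + 1)).natAbs = n + 1 := by omega
      rw [this, pow_succ, mul_comm]
    rw [this]
    exact h
  have := HasSum.of_nat_of_neg_add_one (f := fun k : ℤ => r ^ k.natAbs) hnat hneg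
  convert this using 1
  ring

set_option maxHeartbeats 2000000 in
/-- `Z_ε(s) = Σ_{k∈ℤ}(ε^{2k}+ε^{−2k})^{−s}` has a simple pole at `s = 0` with residue
`1/log ε`: `s·Z_ε(s) → 1/log ε` as `s → 0⁺`. -/
theorem stmt17 (ε : ℝ) (hε : 1 < ε) :
    Filter.Tendsto
      (fun s : ℝ => s * ∑' k : ℤ, (ε ^ (2 * k) + ε ^ (-(2 * k))) ^ (-s))
      (nhdsWithin 0 (Set.Ioi 0)) (nhds (1 / Real.log ε)) := by
  have hε0 : (0:ℝ) < ε := lt_trans one_pos hε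
  set c : ℝ := Real.log ε with hc_def
  have hc : 0 < c := Real.log_pos hε
  set e : ℝ → ℝ := fun s => Real.exp (-(2 * s) * c) with he_def
  have he_pos : ∀ s, 0 < e s := fun s => Real.exp_pos _
  have he_lt1 : ∀ s, 0 < s → e s < 1 := by
    intro s hs
    rw [he_def]
    simp only
    rw [Real.exp_lt_one_iff]
    nlinarith
  have he0 : e 0 = 1 := by simp [he_def]
  -- key rpow identity
  have hpow : ∀ (s : ℝ) (m : ℕ), (ε ^ (2 * (m:ℤ))) ^ (-s) = e s ^ m := by
    intro s m
    rw [he_def]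
    simp only
    rw [Real.rpow_def_of_pos (zpow_pos hε0 _), Real.log_zpow, ← Real.exp_nat_mul]
    congr 1
    push_cast
    ring
  set a : ℤ → ℝ := fun k => ε ^ (2 * k) + ε ^ (-(2 * k)) with ha_def
  have ha_pos : ∀ k, 0 < a k := fun k => add_pos (zpow_pos hε0 _) (zpow_pos hε0 _)
  have hlow : ∀ k : ℤ, ε ^ (2 * (k.natAbs : ℤ)) ≤ a k := by
    intro k
    rcases Int.natAbs_eq k with h | h
    · have h2 : 2 * (k.natAbs : ℤ) = 2 * k := by omega
      rw [h2]
      exact le_add_of_nonneg_right (zpow_pos hε0 _).le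
    · have h2 : 2 * (k.natAbs : ℤ) = -(2 * k) := by omega
      rw [h2]
      exact le_add_of_nonneg_left (zpow_pos hε0 _).le
  have hup : ∀ k : ℤ, a k ≤ 2 * ε ^ (2 * (k.natAbs : ℤ)) := by
    intro k
    have h1 : (2 * k : ℤ) ≤ 2 * (k.natAbs : ℤ) := by omega
    have h2 : (-(2 * k) : ℤ) ≤ 2 * (k.natAbs : ℤ) := by omega
    calc a k ≤ ε ^ (2 * (k.natAbs : ℤ)) + ε ^ (2 * (k.natAbs : ℤ)) :=
          add_le_add (zpow_le_zpow_right₀ hε.le h1) (zpow_le_zpow_right₀ hε.le h2)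
      _ = 2 * ε ^ (2 * (k.natAbs : ℤ)) := (two_mul _).symm
  have hterm_up : ∀ s, 0 < s → ∀ k : ℤ, a k ^ (-s) ≤ e s ^ k.natAbs := by
    intro s hs k
    rw [← hpow s k.natAbs]
    exact Real.rpow_le_rpow_of_nonpos (zpow_pos hε0 _) (hlow k) (by linarith)
  have hterm_low : ∀ s, 0 < s → ∀ k : ℤ, (2:ℝ) ^ (-s) * e s ^ k.natAbs ≤ a k ^ (-s) := by
    intro s hs k
    rw [← hpow s k.natAbs, ← Real.mul_rpow (by norm_num) (zpow_pos hε0 _).le]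
    exact Real.rpow_le_rpow_of_nonpos (ha_pos k) (hup k) (by linarith)
  have hgeom : ∀ s, 0 < s → HasSum (fun k : ℤ => e s ^ k.natAbs) ((1 + e s) * (1 - e s)⁻¹) :=
    fun s hs => geom_int_hasSum (he_pos s).le (he_lt1 s hs)
  have hsumZ : ∀ s : ℝ, 0 < s → Summable (fun k : ℤ => a k ^ (-s)) := fun s hs =>
    ((hgeom s hs).summable).of_nonneg_of_le
      (fun k => (Real.rpow_pos_of_pos (ha_pos k) _).le) (hterm_up s hs)
  set U : ℝ → ℝ := fun s => (1 + e s) * (1 - e s)⁻¹ with hU_def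
  have hZle : ∀ s, 0 < s → (∑' k : ℤ, a k ^ (-s)) ≤ U s := by
    intro s hs
    have h := Summable.tsum_le_tsum (hterm_up s hs) (hsumZ s hs) (hgeom s hs).summable
    rw [(hgeom s hs).tsum_eq] at h
    exact h
  have hZge : ∀ s, 0 < s → (2:ℝ) ^ (-s) * U s ≤ ∑' k : ℤ, a k ^ (-s) := by
    intro s hs
    have h := Summable.tsum_le_tsum (hterm_low s hs) (((hgeom s hs).summable).mul_left _) (hsumZ s hs)
    rw [tsum_mul_left, (hgeom s hs).tsum_eq] at h
    exact h
  -- limit of s * U s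
  have hderiv : HasDerivAt (fun s : ℝ => 1 - e s) (2 * c) 0 := by
    have h1 : HasDerivAt (fun s : ℝ => -(2 * s) * c) (-(2 * c)) 0 := by
      have := (hasDerivAt_id (0:ℝ)).const_mul (-(2 * c))
      simp only [mul_one] at this
      convert this using 1
      · rfl
      · rfl
      funext s; simp only [id_eq]; ring
    have h2 := h1.exp
    simp only [mul_zero, neg_zero, zero_mul, Real.exp_zero, one_mul] at h2
    have h3 := h2.const_sub 1
    convert h3 using 1
    · rfl
    · rfl
    ring
  have hslope : Tendsto (fun s => (1 - e s) / s) (nhdsWithin 0 (Set.Ioi 0)) (nhds (2 * c)) := by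
    have h := hasDerivAt_iff_tendsto_slope.mp hderiv
    have hmono : nhdsWithin (0:ℝ) (Set.Ioi 0) ≤ nhdsWithin 0 {(0:ℝ)}ᶜ :=
      nhdsWithin_mono 0 (fun x hx => ne_of_gt hx)
    refine Tendsto.congr ?_ (h.mono_left hmono)
    intro s
    simp [slope_def_field, he0]
  have hinv : Tendsto (fun s => s / (1 - e s)) (nhdsWithin 0 (Set.Ioi 0)) (nhds (2 * c)⁻¹) := by
    have h := hslope.inv₀ (by positivity)
    refine Tendsto.congr ?_ h
    intro s
    rw [inv_div]
  have hone : Tendsto (fun s => 1 + e s) (nhdsWithin 0 (Set.Ioi 0)) (nhds 2) := by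
    have hcont : Continuous e := by
      rw [he_def]; continuity
    have h2 : Tendsto (fun s : ℝ => 1 + e s) (nhds 0) (nhds (1 + e 0)) :=
      (continuous_const.add hcont).tendsto 0
    rw [he0] at h2
    norm_num at h2
    exact h2.mono_left nhdsWithin_le_nhds
  have hUlim : Tendsto (fun s => s * U s) (nhdsWithin 0 (Set.Ioi 0)) (nhds (1 / c)) := by
    have h := hinv.mul hone
    have heq : (2 * c)⁻¹ * 2 = 1 / c := by field_simp
    rw [heq] at h
    refine Tendsto.congr ?_ h
    intro s
    rw [hU_def]
    simp only [div_eq_mul_inv]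
    ring
  have htwo : Tendsto (fun s : ℝ => (2:ℝ) ^ (-s)) (nhdsWithin 0 (Set.Ioi 0)) (nhds 1) := by
    have hcont : Continuous (fun s : ℝ => (2:ℝ) ^ (-s)) := by
      have : (fun s : ℝ => (2:ℝ) ^ (-s)) = fun s => Real.exp (Real.log 2 * (-s)) := by
        funext s
        rw [Real.rpow_def_of_pos (by norm_num)]
      rw [this]; continuity
    have h2 : Tendsto (fun s : ℝ => (2:ℝ) ^ (-s)) (nhds 0) (nhds ((2:ℝ) ^ (-(0:ℝ)))) :=
      hcont.tendsto 0
    norm_num at h2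
    exact h2.mono_left nhdsWithin_le_nhds
  have hLlim : Tendsto (fun s => (2:ℝ) ^ (-s) * (s * U s)) (nhdsWithin 0 (Set.Ioi 0))
      (nhds (1 / c)) := by
    have h := htwo.mul hUlim
    rw [one_mul] at h
    exact h
  refine tendsto_of_tendsto_of_tendsto_of_le_of_le' hLlim hUlim ?_ ?_
  · filter_upwards [self_mem_nhdsWithin] with s hs
    have hs' : 0 < s := hs
    calc (2:ℝ) ^ (-s) * (s * U s) = s * ((2:ℝ) ^ (-s) * U s) := by ring
      _ ≤ s * ∑' k : ℤ, a k ^ (-s) := mul_le_mul_of_nonneg_left (hZge s hs') hs'.le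
  · filter_upwards [self_mem_nhdsWithin] with s hs
    exact mul_le_mul_of_nonneg_left (hZle s hs) (le_of_lt hs)
end
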